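/- arXiv:2303.17979 — 3 statements merged into one kernel-verified Lean document; each statement's English description precedes it below -/
import Mathlib

section
/- The function f(σ₁, σ₂) = 2m ln(σ₁σ₂) + a/σ₁² + b/σ₂² + 2c/(σ₁σ₂), defined for σ₁, σ₂ > 0 with a, b > 0 and a b > c², attains its minimum at (σ̂₁, σ̂₂), where σ̂₁² = (a + √(a/b)·c)/m and σ̂₂² = (b + √(b/a)·c)/m, and at this minimizer σ̂₁²σ̂₂² m² = (c + √(ab))². -/
theorem stmt_3 (m : ℕ) (hm : 0 < m) (a b c : ℝ) (ha : 0 < a) (hb : 0 < b)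
    (hc : c ^ 2 < a * b) :
    ∀ f : ℝ → ℝ → ℝ,
      (f = fun σ₁ σ₂ =>
        2 * m * Real.log (σ₁ * σ₂) + a / σ₁ ^ 2 + b / σ₂ ^ 2 + 2 * c / (σ₁ * σ₂)) →
      ∀ s₁ s₂ : ℝ,
        s₁ = Real.sqrt ((a + Real.sqrt (a / b) * c) / m) →
        s₂ = Real.sqrt ((b + Real.sqrt (b / a) * c) / m) →
        (∀ σ₁ σ₂ : ℝ, 0 < σ₁ → 0 < σ₂ → f s₁ s₂ ≤ f σ₁ σ₂) ∧
        s₁ ^ 2 * s₂ ^ 2 * (m : ℝ) ^ 2 = (c + Real.sqrt (a * b)) ^ 2 := by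
  intro f hf s₁ s₂ hs₁ hs₂
  subst hf
  have hM0 : (0:ℝ) < (m:ℝ) := Nat.cast_pos.mpr hm
  set M : ℝ := (m:ℝ) with hM
  have hab : 0 < a * b := mul_pos ha hb
  set sab := Real.sqrt (a * b) with hsabdef
  have hsab2 : sab ^ 2 = a * b := Real.sq_sqrt hab.le
  have hsabpos : 0 < sab := Real.sqrt_pos.mpr hab
  have hK : 0 < c + sab := by nlinarith
  set K := c + sab with hKdef
  have h1 : Real.sqrt (a / b) * sab = a := by
    rw [hsabdef, ← Real.sqrt_mul (by positivity)]
    rw [show a / b * (a * b) = a ^ 2 by field_simp]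
    exact Real.sqrt_sq ha.le
  have h2 : Real.sqrt (b / a) * sab = b := by
    rw [hsabdef, ← Real.sqrt_mul (by positivity)]
    rw [show b / a * (a * b) = b ^ 2 by field_simp]
    exact Real.sqrt_sq hb.le
  have hmulsab : Real.sqrt a * Real.sqrt b = sab := by
    rw [hsabdef, ← Real.sqrt_mul ha.le]
  set A := a + Real.sqrt (a / b) * c with hAdef
  set B := b + Real.sqrt (b / a) * c with hBdef
  have hAK : A * sab = a * K := by
    rw [hAdef, hKdef]; linear_combination c * h1
  have hBK : B * sab = b * K := by
    rw [hBdef, hKdef]; linear_combination c * h2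
  have hA : 0 < A := by nlinarith [mul_pos ha hK]
  have hB : 0 < B := by nlinarith [mul_pos hb hK]
  have hABK : A * B = K ^ 2 := by
    have h3 : (A * sab) * (B * sab) = (a * K) * (b * K) := by rw [hAK, hBK]
    have h4 : A * B * (a * b) = K ^ 2 * (a * b) := by
      linear_combination h3 - A * B * hsab2
    exact mul_right_cancel₀ hab.ne' h4
  clear_value A B K sab
  have hs1sq : s₁ ^ 2 = A / M := by
    rw [hs₁]; exact Real.sq_sqrt (by positivity)
  have hs2sq : s₂ ^ 2 = B / M := by
    rw [hs₂]; exact Real.sq_sqrt (by positivity)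
  have hs1pos : 0 < s₁ := by
    rw [hs₁]; exact Real.sqrt_pos.mpr (by positivity)
  have hs2pos : 0 < s₂ := by
    rw [hs₂]; exact Real.sqrt_pos.mpr (by positivity)
  have hprod : s₁ * s₂ = K / M := by
    rw [hs₁, hs₂, ← Real.sqrt_mul (by positivity)]
    rw [show A / M * (B / M) = (K / M) ^ 2 by rw [div_mul_div_comm, hABK]; ring]
    exact Real.sqrt_sq (by positivity)
  constructor
  · intro σ₁ σ₂ hσ1 hσ2
    simp only []
    have e1 : a / (A / M) = M * sab / K := by
      rw [div_div_eq_mul_div, div_eq_div_iff hA.ne' hK.ne']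
      linear_combination -M * hAK
    have e2 : b / (B / M) = M * sab / K := by
      rw [div_div_eq_mul_div, div_eq_div_iff hB.ne' hK.ne']
      linear_combination -M * hBK
    have lhs_eq : 2 * M * Real.log (s₁ * s₂) + a / s₁ ^ 2 + b / s₂ ^ 2
        + 2 * c / (s₁ * s₂) = 2 * M * Real.log (K / M) + 2 * M := by
      rw [hprod, hs1sq, hs2sq, e1, e2]
      have e3 : 2 * c / (K / M) = 2 * c * M / K := by
        rw [div_div_eq_mul_div]
      rw [e3]
      have e4 : M * sab / K + M * sab / K + 2 * c * M / K = 2 * M := by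
        rw [← add_div, ← add_div, div_eq_iff hK.ne', hKdef]
        ring
      linarith [e4]
    rw [lhs_eq]
    have hppos : 0 < σ₁ * σ₂ := mul_pos hσ1 hσ2
    have sa2 : Real.sqrt a ^ 2 = a := Real.sq_sqrt ha.le
    have sb2 : Real.sqrt b ^ 2 = b := Real.sq_sqrt hb.le
    have base : 2 * sab * (σ₁ * σ₂) ≤ a * σ₂ ^ 2 + b * σ₁ ^ 2 := by
      have key : a * σ₂ ^ 2 + b * σ₁ ^ 2 - 2 * sab * (σ₁ * σ₂)
          = (Real.sqrt a * σ₂ - Real.sqrt b * σ₁) ^ 2 := by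
        linear_combination -σ₂ ^ 2 * sa2 - σ₁ ^ 2 * sb2 + 2 * σ₁ * σ₂ * hmulsab
      linarith [sq_nonneg (Real.sqrt a * σ₂ - Real.sqrt b * σ₁), key]
    have step1 : 2 * sab / (σ₁ * σ₂) ≤ a / σ₁ ^ 2 + b / σ₂ ^ 2 := by
      have e : a / σ₁ ^ 2 + b / σ₂ ^ 2 - 2 * sab / (σ₁ * σ₂)
          = (a * σ₂ ^ 2 + b * σ₁ ^ 2 - 2 * sab * (σ₁ * σ₂)) / (σ₁ ^ 2 * σ₂ ^ 2) := by
        field_simp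
      have e2' : (0:ℝ) ≤ (a * σ₂ ^ 2 + b * σ₁ ^ 2 - 2 * sab * (σ₁ * σ₂)) / (σ₁ ^ 2 * σ₂ ^ 2) :=
        div_nonneg (by linarith) (by positivity)
      linarith
    have step2 : 2 * M * Real.log (K / M) + 2 * M
        ≤ 2 * M * Real.log (σ₁ * σ₂) + 2 * K / (σ₁ * σ₂) := by
      have hx : 0 < K / (M * (σ₁ * σ₂)) := by positivity
      have hlog := Real.log_le_sub_one_of_pos hx
      have hsplit : Real.log (K / (M * (σ₁ * σ₂)))
          = Real.log (K / M) - Real.log (σ₁ * σ₂) := by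
        rw [← div_div, Real.log_div (by positivity) hppos.ne']
      rw [hsplit] at hlog
      have hmul : (2 * M) * (Real.log (K / M) - Real.log (σ₁ * σ₂))
          ≤ (2 * M) * (K / (M * (σ₁ * σ₂)) - 1) :=
        mul_le_mul_of_nonneg_left hlog (by positivity)
      have heq : (2 * M) * (K / (M * (σ₁ * σ₂)) - 1) = 2 * K / (σ₁ * σ₂) - 2 * M := by
        field_simp
      rw [heq] at hmul
      linarith
    have hsum : 2 * K / (σ₁ * σ₂) = 2 * sab / (σ₁ * σ₂) + 2 * c / (σ₁ * σ₂) := by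
      rw [hKdef]; ring
    linarith
  · rw [hs1sq, hs2sq]
    field_simp
    linear_combination hABK
end

section
/- The Rao test statistic L_R(x) = 2 xᴴ Ĉ₀⁻¹ P (Pᴴ Ĉ₀⁻¹ P)⁻¹ Pᴴ Ĉ₀⁻¹ x, where Ĉ₀ = Σ̂₀ M Σ̂₀ and Σ̂₀ = diag(σ̂₁ I_m, σ̂₂ I_m) is the ML scale estimate under H₀, is invariant under per-array positive scalings x_i ↦ γ_i x_i (γ_i > 0), because the ML scale estimators satisfy σ̂_i(γ₁x₁, γ₂x₂) = γ_i σ̂_i(x₁, x₂). -/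
open Matrix ComplexOrder

private theorem sqrt_key (s u v a b : ℝ) (ha : 0 < a) (hb : 0 < b) :
    Real.sqrt (a^2*s + Real.sqrt ((a^2*s)/(b^2*u)) * (a*b*v))
      = a * Real.sqrt (s + Real.sqrt (s/u) * v) := by
  have h1 : (a^2*s)/(b^2*u) = (a/b)^2 * (s/u) := by
    rw [div_pow, div_mul_div_comm]
  have h2 : Real.sqrt ((a/b)^2 * (s/u)) = (a/b) * Real.sqrt (s/u) := by
    rw [Real.sqrt_mul (sq_nonneg _), Real.sqrt_sq (by positivity)]
  have h3 : a^2*s + (a/b) * Real.sqrt (s/u) * (a*b*v) = a^2 * (s + Real.sqrt (s/u) * v) := by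
    field_simp
  rw [h1, h2, h3, Real.sqrt_mul (sq_nonneg _), Real.sqrt_sq ha.le]

private theorem rao_key {n k : Type*} [Fintype n] [DecidableEq n] [Fintype k] [DecidableEq k]
    (C : Matrix n n ℂ) (P : Matrix n k ℂ) (D E : Matrix n n ℂ) (G G' : Matrix k k ℂ)
    (hDE : D * E = 1) (hED : E * D = 1) (hGG' : G * G' = 1) (hG'G : G' * G = 1)
    (hEP : E * P = P * G) (hPE : Pᴴ * E = G * Pᴴ) (hD : Dᴴ = D) (x : n → ℂ) :
    star (D.mulVec x) ⬝ᵥ ((D*C*D)⁻¹ * P * (Pᴴ * (D*C*D)⁻¹ * P)⁻¹ * Pᴴ * (D*C*D)⁻¹).mulVec (D.mulVec x)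
      = star x ⬝ᵥ (C⁻¹ * P * (Pᴴ * C⁻¹ * P)⁻¹ * Pᴴ * C⁻¹).mulVec x := by
  have hEinv : D⁻¹ = E := Matrix.inv_eq_right_inv hDE
  have hGinv : G⁻¹ = G' := Matrix.inv_eq_right_inv hGG'
  have hCinv : (D*C*D)⁻¹ = E * C⁻¹ * E := by
    rw [Matrix.mul_inv_rev, Matrix.mul_inv_rev, hEinv, ← mul_assoc]
  set N := Pᴴ * C⁻¹ * P with hN
  have hmid : Pᴴ * (E * C⁻¹ * E) * P = G * N * G := by
    have h1 : Pᴴ * (E * C⁻¹ * E) * P = (Pᴴ * E) * C⁻¹ * (E * P) := by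
      simp only [Matrix.mul_assoc]
    rw [h1, hPE, hEP, hN]; simp only [Matrix.mul_assoc]
  have hmidinv : (G * N * G)⁻¹ = G' * N⁻¹ * G' := by
    rw [Matrix.mul_inv_rev, Matrix.mul_inv_rev, hGinv, ← mul_assoc]
  set Q := C⁻¹ * P * N⁻¹ * Pᴴ * C⁻¹ with hQ
  have hQs : (D*C*D)⁻¹ * P * (Pᴴ * (D*C*D)⁻¹ * P)⁻¹ * Pᴴ * (D*C*D)⁻¹ = E * Q * E := by
    rw [hCinv, hmid, hmidinv]
    have h2 : E * C⁻¹ * E * P * (G' * N⁻¹ * G') * Pᴴ * (E * C⁻¹ * E)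
        = E * C⁻¹ * (E * P) * G' * N⁻¹ * (G' * (Pᴴ * E)) * C⁻¹ * E := by
      simp only [Matrix.mul_assoc]
    rw [h2, hEP, hPE]
    have h3 : E * C⁻¹ * (P * G) * G' * N⁻¹ * (G' * (G * Pᴴ)) * C⁻¹ * E
        = E * (C⁻¹ * P) * (G * G') * N⁻¹ * (G' * G) * (Pᴴ * C⁻¹) * E := by
      simp only [Matrix.mul_assoc]
    rw [h3, hGG', hG'G, hQ]; simp only [Matrix.mul_assoc, Matrix.one_mul]
  rw [hQs, Matrix.mulVec_mulVec, mul_assoc, hED, mul_one, Matrix.star_mulVec, hD,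
    Matrix.dotProduct_mulVec, Matrix.vecMul_vecMul, ← mul_assoc, hDE, one_mul,
    ← Matrix.dotProduct_mulVec]

theorem stmt_7 {m : ℕ} (hm : 0 < m)
    (M : Matrix (Fin m ⊕ Fin m) (Fin m ⊕ Fin m) ℂ) (hM : M.PosDef)
    (p₁ p₂ : Fin m → ℂ) (hp₁ : p₁ ≠ 0) (hp₂ : p₂ ≠ 0)
    (x₁ x₂ : Fin m → ℂ) (hx₁ : x₁ ≠ 0) (hx₂ : x₂ ≠ 0)
    (γ₁ γ₂ : ℝ) (hγ₁ : 0 < γ₁) (hγ₂ : 0 < γ₂) :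
    ∀ P : Matrix (Fin m ⊕ Fin m) (Fin 1 ⊕ Fin 1) ℂ,
      P = Matrix.fromBlocks (Matrix.of fun i _ => p₁ i) 0 0 (Matrix.of fun i _ => p₂ i) →
    ∀ t₁ t₂ : (Fin m → ℂ) → ℝ, ∀ t₁₂ : (Fin m → ℂ) → (Fin m → ℂ) → ℝ,
      (t₁ = fun y₁ => (star y₁ ⬝ᵥ (M⁻¹.toBlocks₁₁).mulVec y₁).re / m) →
      (t₂ = fun y₂ => (star y₂ ⬝ᵥ (M⁻¹.toBlocks₂₂).mulVec y₂).re / m) →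
      (t₁₂ = fun y₁ y₂ => (star y₁ ⬝ᵥ (M⁻¹.toBlocks₁₂).mulVec y₂).re / m) →
    ∀ σ₁ σ₂ : (Fin m → ℂ) → (Fin m → ℂ) → ℝ,
      (σ₁ = fun y₁ y₂ => Real.sqrt (t₁ y₁ + Real.sqrt (t₁ y₁ / t₂ y₂) * t₁₂ y₁ y₂)) →
      (σ₂ = fun y₁ y₂ => Real.sqrt (t₂ y₂ + Real.sqrt (t₂ y₂ / t₁ y₁) * t₁₂ y₁ y₂)) →
    ∀ C₀ : (Fin m → ℂ) → (Fin m → ℂ) → Matrix (Fin m ⊕ Fin m) (Fin m ⊕ Fin m) ℂ,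
      (C₀ = fun y₁ y₂ =>
        Matrix.fromBlocks ((σ₁ y₁ y₂ : ℂ) • 1) 0 0 ((σ₂ y₁ y₂ : ℂ) • 1) * M *
        Matrix.fromBlocks ((σ₁ y₁ y₂ : ℂ) • 1) 0 0 ((σ₂ y₁ y₂ : ℂ) • 1)) →
    ∀ LR : (Fin m → ℂ) → (Fin m → ℂ) → ℝ,
      (LR = fun y₁ y₂ =>
        2 * (star (Sum.elim y₁ y₂) ⬝ᵥ
          ((C₀ y₁ y₂)⁻¹ * P * (Pᴴ * (C₀ y₁ y₂)⁻¹ * P)⁻¹ * Pᴴ * (C₀ y₁ y₂)⁻¹).mulVec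
            (Sum.elim y₁ y₂)).re) →
      (σ₁ ((γ₁ : ℂ) • x₁) ((γ₂ : ℂ) • x₂) = γ₁ * σ₁ x₁ x₂ ∧
       σ₂ ((γ₁ : ℂ) • x₁) ((γ₂ : ℂ) • x₂) = γ₂ * σ₂ x₁ x₂) ∧
      LR ((γ₁ : ℂ) • x₁) ((γ₂ : ℂ) • x₂) = LR x₁ x₂ := by
  intro P hP t₁ t₂ t₁₂ ht₁ ht₂ ht₁₂ σ₁ σ₂ hσ₁ hσ₂ C₀ hC LR hLR
  have hc₁ : (γ₁:ℂ) ≠ 0 := Complex.ofReal_ne_zero.2 hγ₁.ne'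
  have hc₂ : (γ₂:ℂ) ≠ 0 := Complex.ofReal_ne_zero.2 hγ₂.ne'
  -- generic scaling of quadratic forms
  have hq : ∀ (B : Matrix (Fin m) (Fin m) ℂ) (γ δ : ℝ) (u v : Fin m → ℂ),
      ((star ((γ:ℂ)•u)) ⬝ᵥ B.mulVec ((δ:ℂ)•v)).re = γ*δ*(star u ⬝ᵥ B.mulVec v).re := by
    intro B γ δ u v
    simp [Matrix.mulVec_smul, smul_smul, Complex.ext_iff]
    ring
  have ht1s : t₁ ((γ₁:ℂ)•x₁) = γ₁^2 * t₁ x₁ := by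
    rw [ht₁]; dsimp only; rw [hq]; ring
  have ht2s : t₂ ((γ₂:ℂ)•x₂) = γ₂^2 * t₂ x₂ := by
    rw [ht₂]; dsimp only; rw [hq]; ring
  have ht12s : t₁₂ ((γ₁:ℂ)•x₁) ((γ₂:ℂ)•x₂) = γ₁*γ₂*t₁₂ x₁ x₂ := by
    rw [ht₁₂]; dsimp only; rw [hq]; ring
  have hσ1s : σ₁ ((γ₁:ℂ)•x₁) ((γ₂:ℂ)•x₂) = γ₁ * σ₁ x₁ x₂ := by
    rw [hσ₁]; dsimp only; rw [ht1s, ht2s, ht12s]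
    exact sqrt_key (t₁ x₁) (t₂ x₂) (t₁₂ x₁ x₂) γ₁ γ₂ hγ₁ hγ₂
  have hσ2s : σ₂ ((γ₁:ℂ)•x₁) ((γ₂:ℂ)•x₂) = γ₂ * σ₂ x₁ x₂ := by
    rw [hσ₂]; dsimp only; rw [ht1s, ht2s, ht12s]
    rw [show γ₁*γ₂*t₁₂ x₁ x₂ = γ₂*γ₁*t₁₂ x₁ x₂ by ring]
    exact sqrt_key (t₂ x₂) (t₁ x₁) (t₁₂ x₁ x₂) γ₂ γ₁ hγ₂ hγ₁
  refine ⟨⟨hσ1s, hσ2s⟩, ?_⟩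
  -- block scaling matrices
  set D : Matrix (Fin m ⊕ Fin m) (Fin m ⊕ Fin m) ℂ :=
    fromBlocks ((γ₁:ℂ)•(1:Matrix (Fin m) (Fin m) ℂ)) 0 0 ((γ₂:ℂ)•(1:Matrix (Fin m) (Fin m) ℂ))
    with hDdef
  set E : Matrix (Fin m ⊕ Fin m) (Fin m ⊕ Fin m) ℂ :=
    fromBlocks (((γ₁:ℂ)⁻¹)•(1:Matrix (Fin m) (Fin m) ℂ)) 0 0
      (((γ₂:ℂ)⁻¹)•(1:Matrix (Fin m) (Fin m) ℂ)) with hEdef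
  set G : Matrix (Fin 1 ⊕ Fin 1) (Fin 1 ⊕ Fin 1) ℂ :=
    fromBlocks (((γ₁:ℂ)⁻¹)•(1:Matrix (Fin 1) (Fin 1) ℂ)) 0 0
      (((γ₂:ℂ)⁻¹)•(1:Matrix (Fin 1) (Fin 1) ℂ)) with hGdef
  set G' : Matrix (Fin 1 ⊕ Fin 1) (Fin 1 ⊕ Fin 1) ℂ :=
    fromBlocks ((γ₁:ℂ)•(1:Matrix (Fin 1) (Fin 1) ℂ)) 0 0
      ((γ₂:ℂ)•(1:Matrix (Fin 1) (Fin 1) ℂ)) with hG'def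
  have finisher : ∀ (k : ℕ) (A B : Matrix (Fin k) (Fin k) ℂ),
      A = 1 → B = 1 → (A = 1 ∧ B = 1) := fun _ _ _ hA hB => ⟨hA, hB⟩
  have hDE : D * E = 1 := by
    rw [hDdef, hEdef]
    simp [Matrix.fromBlocks_multiply, ← Matrix.fromBlocks_one]
    refine ⟨?_, ?_⟩ <;> rw [← Complex.coe_smul, smul_smul] <;>
      first
        | rw [inv_mul_cancel₀ hc₁, one_smul]
        | rw [inv_mul_cancel₀ hc₂, one_smul]
        | rw [mul_inv_cancel₀ hc₁, one_smul]
        | rw [mul_inv_cancel₀ hc₂, one_smul]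
  have hED : E * D = 1 := by
    rw [hDdef, hEdef]
    simp [Matrix.fromBlocks_multiply, ← Matrix.fromBlocks_one]
    refine ⟨?_, ?_⟩ <;> rw [← Complex.coe_smul, smul_smul] <;>
      first
        | rw [inv_mul_cancel₀ hc₁, one_smul]
        | rw [inv_mul_cancel₀ hc₂, one_smul]
        | rw [mul_inv_cancel₀ hc₁, one_smul]
        | rw [mul_inv_cancel₀ hc₂, one_smul]
  have hGG' : G * G' = 1 := by
    rw [hGdef, hG'def]
    simp [Matrix.fromBlocks_multiply, ← Matrix.fromBlocks_one]
    refine ⟨?_, ?_⟩ <;> rw [← Complex.coe_smul, smul_smul] <;>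
      first
        | rw [inv_mul_cancel₀ hc₁, one_smul]
        | rw [inv_mul_cancel₀ hc₂, one_smul]
        | rw [mul_inv_cancel₀ hc₁, one_smul]
        | rw [mul_inv_cancel₀ hc₂, one_smul]
  have hG'G : G' * G = 1 := by
    rw [hGdef, hG'def]
    simp [Matrix.fromBlocks_multiply, ← Matrix.fromBlocks_one]
    refine ⟨?_, ?_⟩ <;> rw [← Complex.coe_smul, smul_smul] <;>
      first
        | rw [inv_mul_cancel₀ hc₁, one_smul]
        | rw [inv_mul_cancel₀ hc₂, one_smul]
        | rw [mul_inv_cancel₀ hc₁, one_smul]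
        | rw [mul_inv_cancel₀ hc₂, one_smul]
  have hEP : E * P = P * G := by
    rw [hEdef, hGdef, hP]
    simp [Matrix.fromBlocks_multiply, Matrix.smul_mul, Matrix.mul_smul]
  have hPE : Pᴴ * E = G * Pᴴ := by
    rw [hEdef, hGdef, hP]
    simp [Matrix.fromBlocks_conjTranspose, Matrix.fromBlocks_multiply, Matrix.smul_mul,
      Matrix.mul_smul]
  have hDH : Dᴴ = D := by
    rw [hDdef]
    simp [Matrix.fromBlocks_conjTranspose, Matrix.conjTranspose_smul, Complex.star_def,
      Complex.conj_ofReal]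
  have hys : Sum.elim ((γ₁:ℂ)•x₁) ((γ₂:ℂ)•x₂) = D.mulVec (Sum.elim x₁ x₂) := by
    rw [hDdef]; funext i
    cases i <;> simp [Matrix.fromBlocks_mulVec, Matrix.smul_mulVec]
  have hsmul : ∀ (k : ℕ) (c d : ℝ), ((↑(c*d):ℂ)) • (1:Matrix (Fin k) (Fin k) ℂ)
      = ((c:ℂ) • 1) * ((d:ℂ) • 1) := by
    intro k c d
    rw [Matrix.smul_mul, Matrix.one_mul, smul_smul, Complex.ofReal_mul]
  have hC0s : C₀ ((γ₁:ℂ)•x₁) ((γ₂:ℂ)•x₂) = D * C₀ x₁ x₂ * D := by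
    rw [hC]; dsimp only; rw [hσ1s, hσ2s]
    set Sx : Matrix (Fin m ⊕ Fin m) (Fin m ⊕ Fin m) ℂ :=
      fromBlocks ((σ₁ x₁ x₂:ℂ)•(1:Matrix (Fin m) (Fin m) ℂ)) 0 0
        ((σ₂ x₁ x₂:ℂ)•(1:Matrix (Fin m) (Fin m) ℂ)) with hSdef
    have hDS : fromBlocks ((↑(γ₁*σ₁ x₁ x₂):ℂ)•(1:Matrix (Fin m) (Fin m) ℂ)) 0 0
        ((↑(γ₂*σ₂ x₁ x₂):ℂ)•(1:Matrix (Fin m) (Fin m) ℂ)) = D * Sx := by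
      rw [hsmul m γ₁ (σ₁ x₁ x₂), hsmul m γ₂ (σ₂ x₁ x₂), hDdef, hSdef]
      simp [Matrix.fromBlocks_multiply]
    have hSD : fromBlocks ((↑(γ₁*σ₁ x₁ x₂):ℂ)•(1:Matrix (Fin m) (Fin m) ℂ)) 0 0
        ((↑(γ₂*σ₂ x₁ x₂):ℂ)•(1:Matrix (Fin m) (Fin m) ℂ)) = Sx * D := by
      rw [mul_comm γ₁ (σ₁ x₁ x₂), mul_comm γ₂ (σ₂ x₁ x₂),
        hsmul m (σ₁ x₁ x₂) γ₁, hsmul m (σ₂ x₁ x₂) γ₂, hDdef, hSdef]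
      simp [Matrix.fromBlocks_multiply]
    have hcomm : D * Sx = Sx * D := by rw [← hDS, ← hSD]
    rw [hDS]
    nth_rewrite 2 [hcomm]
    simp only [Matrix.mul_assoc]
  rw [hLR]; dsimp only
  rw [hys, hC0s, rao_key (C₀ x₁ x₂) P D E G G' hDE hED hGG' hG'G hEP hPE hDH (Sum.elim x₁ x₂)]
end

section
/- Under H₀ with z_i = √τ_i c_i, the GLRT statistic L_G(z₁, z₂) has a distribution that does not depend on the textures τ₁, τ₂ > 0; formally, L_G(√τ₁ c₁, √τ₂ c₂) = L_G(c₁, c₂) for all positive τ₁, τ₂ and all vectors c₁, c₂. -/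
/-! Scaling `y₁ ↦ a • y₁`, `y₂ ↦ b • y₂` with `a, b ≥ 0` multiplies the cross term of `num` by
`a * b` and the two diagonal quadratic forms by `a²` and `b²`, so the square root of their product
also gains the factor `a * b`: `num A` is positively homogeneous for every matrix `A`. Both square
roots in `L_G` therefore acquire the same factor `√(√τ₁ √τ₂)`, which cancels. -/

open Matrix ComplexOrder

section Homogeneity

variable {ι κ : Type*} [Fintype ι] [Fintype κ]

lemma star_ofReal_smul_dotProduct_mulVec_ofReal_smul (A : Matrix ι κ ℂ) (x : ι → ℂ)
    (y : κ → ℂ) (a b : ℝ) :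
    star ((a : ℂ) • x) ⬝ᵥ A *ᵥ ((b : ℂ) • y) = (a * b : ℝ) * (star x ⬝ᵥ A *ᵥ y) := by
  simp only [star_smul, Complex.star_def, Complex.conj_ofReal, mulVec_smul, smul_dotProduct,
    dotProduct_smul, smul_eq_mul, Complex.ofReal_mul]
  ring

lemma re_star_ofReal_smul_dotProduct_mulVec_ofReal_smul (A : Matrix ι κ ℂ) (x : ι → ℂ)
    (y : κ → ℂ) (a b : ℝ) :
    (star ((a : ℂ) • x) ⬝ᵥ A *ᵥ ((b : ℂ) • y)).re = a * b * (star x ⬝ᵥ A *ᵥ y).re := by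
  rw [star_ofReal_smul_dotProduct_mulVec_ofReal_smul, Complex.re_ofReal_mul]

lemma cross_add_sqrt_diag_ofReal_smul (A₁₁ : Matrix ι ι ℂ) (A₁₂ : Matrix ι κ ℂ)
    (A₂₂ : Matrix κ κ ℂ) (y₁ : ι → ℂ) (y₂ : κ → ℂ) (k : ℝ) {a b : ℝ} (ha : 0 ≤ a)
    (hb : 0 ≤ b) :
    (star ((a : ℂ) • y₁) ⬝ᵥ A₁₂ *ᵥ ((b : ℂ) • y₂)).re / k +
        √((star ((a : ℂ) • y₁) ⬝ᵥ A₁₁ *ᵥ ((a : ℂ) • y₁)).re / k *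
          ((star ((b : ℂ) • y₂) ⬝ᵥ A₂₂ *ᵥ ((b : ℂ) • y₂)).re / k))
      = a * b * ((star y₁ ⬝ᵥ A₁₂ *ᵥ y₂).re / k +
        √((star y₁ ⬝ᵥ A₁₁ *ᵥ y₁).re / k * ((star y₂ ⬝ᵥ A₂₂ *ᵥ y₂).re / k))) := by
  simp only [re_star_ofReal_smul_dotProduct_mulVec_ofReal_smul]
  set q₁ := (star y₁ ⬝ᵥ A₁₁ *ᵥ y₁).re
  set q₂ := (star y₂ ⬝ᵥ A₂₂ *ᵥ y₂).re
  have hsq : a * a * q₁ / k * (b * b * q₂ / k) = (a * b) ^ 2 * (q₁ / k * (q₂ / k)) := by ring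
  rw [hsq, Real.sqrt_mul (by positivity), Real.sqrt_sq (by positivity)]
  ring

end Homogeneity

lemma sqrt_mul_div_sqrt_mul_cancel_left {s : ℝ} (hs : 0 < s) (x y : ℝ) :
    √(s * x) / √(s * y) = √x / √y := by
  rw [Real.sqrt_mul hs.le, Real.sqrt_mul hs.le,
    mul_div_mul_left _ _ (Real.sqrt_pos.mpr hs).ne']

theorem stmt_16_general {m : ℕ}
    (M : Matrix (Fin m ⊕ Fin m) (Fin m ⊕ Fin m) ℂ)
    (p₁ p₂ : Fin m → ℂ)
    (c₁ c₂ : Fin m → ℂ) (τ₁ τ₂ : ℝ) (hτ₁ : 0 < τ₁) (hτ₂ : 0 < τ₂) :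
    ∀ P : Matrix (Fin m ⊕ Fin m) (Fin 1 ⊕ Fin 1) ℂ,
      P = Matrix.fromBlocks (Matrix.of fun i _ => p₁ i) 0 0 (Matrix.of fun i _ => p₂ i) →
    ∀ num : Matrix (Fin m ⊕ Fin m) (Fin m ⊕ Fin m) ℂ → (Fin m → ℂ) → (Fin m → ℂ) → ℝ,
      (num = fun A y₁ y₂ =>
        (star y₁ ⬝ᵥ (A.toBlocks₁₂).mulVec y₂).re / m +
        Real.sqrt (((star y₁ ⬝ᵥ (A.toBlocks₁₁).mulVec y₁).re / m) *
          ((star y₂ ⬝ᵥ (A.toBlocks₂₂).mulVec y₂).re / m))) →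
    ∀ LG : (Fin m → ℂ) → (Fin m → ℂ) → ℝ,
      (LG = fun y₁ y₂ =>
        Real.sqrt (num M⁻¹ y₁ y₂) /
        Real.sqrt (num (M⁻¹ - M⁻¹ * P * (Pᴴ * M⁻¹ * P)⁻¹ * Pᴴ * M⁻¹) y₁ y₂)) →
      LG ((Real.sqrt τ₁ : ℂ) • c₁) ((Real.sqrt τ₂ : ℂ) • c₂) = LG c₁ c₂ := by
  rintro P - num rfl LG rfl
  have hτ₁' : 0 < √τ₁ := Real.sqrt_pos.mpr hτ₁
  have hτ₂' : 0 < √τ₂ := Real.sqrt_pos.mpr hτ₂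
  simp only [cross_add_sqrt_diag_ofReal_smul _ _ _ _ _ _ hτ₁'.le hτ₂'.le]
  exact sqrt_mul_div_sqrt_mul_cancel_left (mul_pos hτ₁' hτ₂') _ _

theorem stmt_16 {m : ℕ} (hm : 0 < m)
    (M : Matrix (Fin m ⊕ Fin m) (Fin m ⊕ Fin m) ℂ) (hM : M.PosDef)
    (p₁ p₂ : Fin m → ℂ) (hp₁ : p₁ ≠ 0) (hp₂ : p₂ ≠ 0)
    (c₁ c₂ : Fin m → ℂ) (τ₁ τ₂ : ℝ) (hτ₁ : 0 < τ₁) (hτ₂ : 0 < τ₂) :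
    ∀ P : Matrix (Fin m ⊕ Fin m) (Fin 1 ⊕ Fin 1) ℂ,
      P = Matrix.fromBlocks (Matrix.of fun i _ => p₁ i) 0 0 (Matrix.of fun i _ => p₂ i) →
    ∀ num : Matrix (Fin m ⊕ Fin m) (Fin m ⊕ Fin m) ℂ → (Fin m → ℂ) → (Fin m → ℂ) → ℝ,
      (num = fun A y₁ y₂ =>
        (star y₁ ⬝ᵥ (A.toBlocks₁₂).mulVec y₂).re / m +
        Real.sqrt (((star y₁ ⬝ᵥ (A.toBlocks₁₁).mulVec y₁).re / m) *
          ((star y₂ ⬝ᵥ (A.toBlocks₂₂).mulVec y₂).re / m))) →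
    ∀ LG : (Fin m → ℂ) → (Fin m → ℂ) → ℝ,
      (LG = fun y₁ y₂ =>
        Real.sqrt (num M⁻¹ y₁ y₂) /
        Real.sqrt (num (M⁻¹ - M⁻¹ * P * (Pᴴ * M⁻¹ * P)⁻¹ * Pᴴ * M⁻¹) y₁ y₂)) →
      LG ((Real.sqrt τ₁ : ℂ) • c₁) ((Real.sqrt τ₂ : ℂ) • c₂) = LG c₁ c₂ :=
  stmt_16_general M p₁ p₂ c₁ c₂ τ₁ τ₂ hτ₁ hτ₂
end
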